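/- arXiv:math/0510631 — 2 statements merged into one kernel-verified Lean document; each statement's English description precedes it below -/
import Mathlib

section
/- Let Γ = A*_φ with C_{-1} = C_{+1} = A, so φ is an automorphism of A. Suppose the image of φ in Out(A) has finite order n, and let a_0 ∈ A be an element such that φ^n(a) = a_0 a a_0^{-1} for all a ∈ A. Then the center of Γ is the union over all integers p of the sets t^{pn} · (Fix φ ∩ a_0^p Z(A)). -/
/-!
Internal characterization of the HNN extension `Γ = A*_φ`:
`A` is a subgroup of `Γ`, `t ∈ Γ` is the stable letter, `Cm = C_{-1}` and
`Cp = C_{+1}` are subgroups of `A` with `t⁻¹ Cm t = Cp` (so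
`φ(c) = t⁻¹ c t` for `c ∈ Cm`), `A ∪ {t}` generates `Γ`, and Britton's lemma
holds: a reduced word `g₀ t^{ε₁} g₁ ⋯ t^{εₙ} gₙ` with `n ≥ 1` is nontrivial.
-/

variable {Γ : Type*} [Group Γ]

/-- The subgroup `C_ε` : `C_{+1} = Cp` when `ε = 1`, and `C_{-1} = Cm`
otherwise. -/
def toCsub (Cm Cp : Subgroup Γ) (ε : ℤ) : Subgroup Γ := if ε = 1 then Cp else Cm

/-- The pair `(g₀, [(ε₁, g₁), …, (εₙ, gₙ)])` encodes the word
`g₀ t^{ε₁} g₁ ⋯ t^{εₙ} gₙ`; it is reduced when all `gᵢ ∈ A`, all `εᵢ = ±1`,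
and it contains no pinch `t^{εᵢ} gᵢ t^{-εᵢ}` with `gᵢ ∈ C_{εᵢ}`. -/
def HNNReducedWord (A Cm Cp : Subgroup Γ) (g₀ : Γ) (w : List (ℤ × Γ)) : Prop :=
  g₀ ∈ A ∧ (∀ p ∈ w, (p.1 = 1 ∨ p.1 = -1) ∧ p.2 ∈ A) ∧
    w.Chain' fun p q => q.1 = -p.1 → p.2 ∉ toCsub Cm Cp p.1

/-- The element of `Γ` represented by the word
`g₀ t^{ε₁} g₁ ⋯ t^{εₙ} gₙ`. -/
def hnnProd (t g₀ : Γ) (w : List (ℤ × Γ)) : Γ :=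
  g₀ * (w.map fun p => t ^ p.1 * p.2).prod

/-- `Γ` is the HNN extension of its subgroup `A` relative to the isomorphism
`φ : Cm → Cp`, `φ(c) = t⁻¹ c t`, with stable letter `t`. -/
def IsHNN (A Cm Cp : Subgroup Γ) (t : Γ) : Prop :=
  Cm ≤ A ∧ Cp ≤ A ∧ (∀ c : Γ, c ∈ Cm ↔ t⁻¹ * c * t ∈ Cp) ∧
    Subgroup.closure ((A : Set Γ) ∪ {t}) = ⊤ ∧
    ∀ g₀ w, HNNReducedWord A Cm Cp g₀ w → w ≠ [] → hnnProd t g₀ w ≠ 1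

/-- `g` is cyclically reduced: `g ∈ A` (length 1), or `g` has a reduced form
`g₁ t^{ε₁} g₂ ⋯ gₙ t^{εₙ} gₙ₊₁` with `gₙ₊₁ = 1` and either `n = 1` or
`t^{εₙ} g₁ t^{ε₁}` is not a pinch. -/
def HNNCyclicallyReduced (A Cm Cp : Subgroup Γ) (t g : Γ) : Prop :=
  g ∈ A ∨
    ∃ g₀ w, HNNReducedWord A Cm Cp g₀ w ∧ hnnProd t g₀ w = g ∧
      ∃ p q, w.head? = some q ∧ w.getLast? = some p ∧ p.2 = 1 ∧
        (w.length = 1 ∨ ¬(q.1 = -p.1 ∧ g₀ ∈ toCsub Cm Cp p.1))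

/-! Since `t` normalizes `A` and `A ∪ {t}` generates `Γ`, every element is `t ^ k * a` with
`a ∈ A`, and it is central iff `a` is fixed by `t` and conjugation by `t ^ k` acts on `A` as
conjugation by `a`. The exponents `k` for which `t ^ k` acts on `A` by an inner automorphism
form the kernel of `ℤ → Out(A)`, which is `nℤ` by minimality of `n`. For `k = p * n` the action
of `t ^ k` is conjugation by `a₀ ^ p` (because `t ^ n * a₀` centralizes `A`), so `a` and `a₀ ^ p`
differ by an element of the centralizer of `A`. -/

namespace Subgroup

variable {A : Subgroup Γ} {t : Γ}

theorem normal_of_closure_union_singleton_eq_top (hA : ∀ c : Γ, c ∈ A ↔ t⁻¹ * c * t ∈ A)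
    (hgen : closure ((A : Set Γ) ∪ {t}) = ⊤) : A.Normal := by
  have ht : t ∈ normalizer (A : Set Γ) := by
    rw [← inv_inv t]
    exact inv_mem (mem_normalizer_iff.mpr fun c => by simpa using hA c)
  rw [← normalizer_eq_top_iff, eq_top_iff, ← hgen, closure_le]
  exact Set.union_subset le_normalizer (Set.singleton_subset_iff.mpr ht)

theorem exists_eq_zpow_mul [A.Normal] (hgen : closure ((A : Set Γ) ∪ {t}) = ⊤) (g : Γ) :
    ∃ k : ℤ, ∃ a ∈ A, g = t ^ k * a := by
  have htop : zpowers t ⊔ A = ⊤ := by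
    rw [eq_top_iff, ← hgen, closure_le]
    exact Set.union_subset (SetLike.coe_subset_coe.mpr le_sup_right)
      (Set.singleton_subset_iff.mpr (le_sup_left (a := zpowers t) (mem_zpowers t)))
  have hg : g ∈ ((zpowers t ⊔ A : Subgroup Γ) : Set Γ) := by simp [htop]
  rw [mul_normal] at hg
  obtain ⟨_, ⟨k, rfl⟩, a, ha, rfl⟩ := hg
  exact ⟨k, a, ha, rfl⟩

theorem zpow_mul_mem_center_iff (hgen : closure ((A : Set Γ) ∪ {t}) = ⊤) {k : ℤ} {a : Γ} :
    t ^ k * a ∈ center Γ ↔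
      t⁻¹ * a * t = a ∧ ∀ b ∈ A, (t ^ k)⁻¹ * b * t ^ k = a * b * a⁻¹ := by
  rw [← centralizer_univ, ← coe_top, ← hgen, centralizer_closure, mem_centralizer_iff,
    Set.union_singleton, Set.forall_mem_insert]
  refine and_congr ?_ (forall₂_congr fun b _ => ?_)
  · rw [← mul_assoc, (Commute.self_zpow t k).eq, mul_assoc, mul_assoc, mul_right_inj,
      mul_assoc, inv_mul_eq_iff_eq_mul, eq_comm]
  · rw [eq_mul_inv_iff_mul_eq, mul_assoc _ (t ^ k), mul_assoc (t ^ k)⁻¹, inv_mul_eq_iff_eq_mul,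
      mul_assoc (t ^ k)]

theorem conj_eq_conj_iff_inv_mul_mem_centralizer {S : Set Γ} {x y : Γ} :
    (∀ b ∈ S, y * b * y⁻¹ = x * b * x⁻¹) ↔ y⁻¹ * x ∈ centralizer S := by
  rw [mem_centralizer_iff]
  refine forall₂_congr fun b _ => ⟨fun h => ?_, fun h => ?_⟩
  · calc b * (y⁻¹ * x) = y⁻¹ * (y * b * y⁻¹) * x := by group
      _ = y⁻¹ * x * b := by rw [h]; group
  · calc y * b * y⁻¹ = y * (b * (y⁻¹ * x)) * x⁻¹ := by group
      _ = x * b * x⁻¹ := by rw [h]; group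

theorem conj_zpow_eq_of_conj_eq {x y : Γ} (hy : y ∈ A)
    (h : ∀ a ∈ A, x⁻¹ * a * x = y * a * y⁻¹) (q : ℤ) {a : Γ} (ha : a ∈ A) :
    (x ^ q)⁻¹ * a * x ^ q = y ^ q * a * (y ^ q)⁻¹ := by
  have hc : x * y ∈ centralizer (A : Set Γ) := mem_centralizer_iff.mpr fun b hb => by
    calc b * (x * y) = x * (x⁻¹ * b * x) * y := by group
      _ = x * y * b := by rw [h b hb]; group
  have hx : x ^ q = (x * y) ^ q * (y ^ q)⁻¹ := by
    rw [← inv_zpow, ← (Commute.symm (mem_centralizer_iff.mp hc y⁻¹ (inv_mem hy))).mul_zpow q,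
      mul_inv_cancel_right]
  have hca : a * (x * y) ^ q = (x * y) ^ q * a := mem_centralizer_iff.mp (zpow_mem hc q) a ha
  rw [hx]
  calc _ = y ^ q * (((x * y) ^ q)⁻¹ * (a * (x * y) ^ q)) * (y ^ q)⁻¹ := by group
    _ = _ := by rw [hca, inv_mul_cancel_left]

variable (A t) in
def innerExponents [A.Normal] : AddSubgroup ℤ where
  carrier := {k | ∃ b ∈ A, ∀ a ∈ A, (t ^ k)⁻¹ * a * t ^ k = b * a * b⁻¹}
  zero_mem' := ⟨1, one_mem A, fun a _ => by simp⟩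
  add_mem' := by
    rintro k l ⟨b, hb, hk⟩ ⟨c, hc, hl⟩
    have hconj {g : Γ} (hg : g ∈ A) : (t ^ l)⁻¹ * g * t ^ l ∈ A := by
      simpa using ‹A.Normal›.conj_mem g hg (t ^ l)⁻¹
    refine ⟨(t ^ l)⁻¹ * b * t ^ l * c, mul_mem (hconj hb) hc, fun a ha => ?_⟩
    calc (t ^ (k + l))⁻¹ * a * t ^ (k + l) = (t ^ l)⁻¹ * ((t ^ k)⁻¹ * a * t ^ k) * t ^ l := by
          rw [zpow_add]; group
      _ = ((t ^ l)⁻¹ * b * t ^ l) * ((t ^ l)⁻¹ * a * t ^ l) * ((t ^ l)⁻¹ * b * t ^ l)⁻¹ := by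
          rw [hk a ha]; group
      _ = _ := by rw [hl a ha]; group
  neg_mem' := by
    rintro k ⟨b, hb, hk⟩
    refine ⟨b⁻¹, inv_mem hb, fun a ha => ?_⟩
    have hconj := hk _ (‹A.Normal›.conj_mem a ha (t ^ k))
    rw [zpow_neg, inv_inv, inv_inv]
    calc t ^ k * a * (t ^ k)⁻¹ = b⁻¹ * (b * (t ^ k * a * (t ^ k)⁻¹) * b⁻¹) * b := by group
      _ = b⁻¹ * a * b := by rw [← hconj]; group

@[simp]
theorem mem_innerExponents [A.Normal] {k : ℤ} :
    k ∈ innerExponents A t ↔ ∃ b ∈ A, ∀ a ∈ A, (t ^ k)⁻¹ * a * t ^ k = b * a * b⁻¹ :=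
  Iff.rfl

end Subgroup

theorem AddSubgroup.natCast_dvd_of_mem_of_forall_lt_notMem {H : AddSubgroup ℤ} {n : ℕ}
    (hn : 0 < n) (hnH : (n : ℤ) ∈ H) (hmin : ∀ m : ℕ, 0 < m → m < n → (m : ℤ) ∉ H) {k : ℤ}
    (hk : k ∈ H) : (n : ℤ) ∣ k := by
  have hr : k % n ∈ H := by
    rw [Int.emod_def]
    exact sub_mem hk (by rw [mul_comm]; simpa using zsmul_mem hnH (k / n))
  have h0 : 0 ≤ k % n := Int.emod_nonneg k (by omega)
  have hlt : k % n < n := Int.emod_lt_of_pos k (by omega)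
  rw [Int.dvd_iff_emod_eq_zero]
  by_contra hne
  exact hmin (k % n).toNat (by omega) (by omega) (by rwa [Int.toNat_of_nonneg h0])

open Subgroup in
/-- Center of an HNN extension, case (iii): if `C_{-1} = C_{+1} = A` (so
`φ : a ↦ t⁻¹ a t` is an automorphism of `A`) and `φ` has order exactly `n` in
`Out(A)`, with `φⁿ = conjugation by a₀ ∈ A`, then the center of `Γ` is
`⋃_{p ∈ ℤ} t^{pn} · (Fix φ ∩ a₀^p Z(A))`. -/
theorem hnn_center_finite_order (A Cm Cp : Subgroup Γ) (t : Γ)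
    (hH : IsHNN A Cm Cp t) (hCm : Cm = A) (hCp : Cp = A)
    (n : ℕ) (hn : 0 < n) (a₀ : Γ) (ha₀ : a₀ ∈ A)
    (hinner : ∀ a ∈ A, (t ^ n)⁻¹ * a * t ^ n = a₀ * a * a₀⁻¹)
    (hmin : ∀ m : ℕ, 0 < m → m < n →
      ¬∃ b ∈ A, ∀ a ∈ A, (t ^ m)⁻¹ * a * t ^ m = b * a * b⁻¹) :
    (Subgroup.center Γ : Set Γ) =
      {g : Γ | ∃ p : ℤ, ∃ x : Γ,
        (x ∈ A ∧ t⁻¹ * x * t = x) ∧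
        (∃ z : Γ, z ∈ A ∧ (∀ a ∈ A, z * a = a * z) ∧ x = a₀ ^ p * z) ∧
        g = t ^ (p * (n : ℤ)) * x} := by
  obtain ⟨-, -, hconj, hgen, -⟩ := hH
  subst Cm Cp
  have := normal_of_closure_union_singleton_eq_top hconj hgen
  have hpow (p : ℤ) : ∀ b ∈ A, (t ^ (p * n))⁻¹ * b * t ^ (p * n) = a₀ ^ p * b * (a₀ ^ p)⁻¹ := by
    intro b hb
    rw [mul_comm, zpow_mul, zpow_natCast]
    exact conj_zpow_eq_of_conj_eq ha₀ hinner p hb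
  ext g
  constructor
  · intro hg
    obtain ⟨k, a, ha, rfl⟩ := exists_eq_zpow_mul hgen g
    obtain ⟨hfix, hk⟩ := (zpow_mul_mem_center_iff hgen).mp hg
    obtain ⟨p, rfl⟩ : (n : ℤ) ∣ k :=
      AddSubgroup.natCast_dvd_of_mem_of_forall_lt_notMem (H := innerExponents A t) hn
        ⟨a₀, ha₀, by simpa using hinner⟩ (fun m hm hmn h => hmin m hm hmn (by simpa using h))
        ⟨a, ha, hk⟩
    rw [mul_comm] at hk ⊢
    have hz := conj_eq_conj_iff_inv_mul_mem_centralizer.mp fun b hb =>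
      (hpow p b hb).symm.trans (hk b hb)
    exact ⟨p, a, ⟨ha, hfix⟩, ⟨_, mul_mem (inv_mem (zpow_mem ha₀ p)) ha,
      fun b hb => (mem_centralizer_iff.mp hz b hb).symm, by group⟩, rfl⟩
  · rintro ⟨p, x, ⟨-, hfix⟩, ⟨z, -, hzc, rfl⟩, rfl⟩
    refine (zpow_mul_mem_center_iff hgen).mpr ⟨hfix, fun b hb => (hpow p b hb).trans ?_⟩
    refine conj_eq_conj_iff_inv_mul_mem_centralizer.mpr ?_ b hb
    rw [inv_mul_cancel_left]
    exact mem_centralizer_iff.mpr fun c hc => (hzc c hc).symm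
end

section
/- Let G be a group, H a subgroup of G, and let 2G = G *_H G' be the double of G along H. Then G embeds naturally into 2G, and two elements u, v ∈ G are conjugate in 2G if and only if they are conjugate in G. -/
/-- The double `2G = G *_H G'` of a group `G` along a subgroup `H`, realized as
the amalgamated free product (pushout) of two copies of `G` over `H`. -/
abbrev GroupDouble {G : Type*} [Group G] (H : Subgroup G) : Type _ :=
  Monoid.PushoutI (fun _ : Bool => H.subtype)

/-- The natural map of `G` onto one of the two copies of `G` inside `2G`. -/
abbrev GroupDouble.incl {G : Type*} [Group G] (H : Subgroup G) :
    G →* GroupDouble H :=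
  Monoid.PushoutI.of (φ := fun _ : Bool => H.subtype) true

/-- `G` embeds naturally into its double `2G` along a subgroup `H`, and two
elements of `G` are conjugate in `2G` if and only if they are conjugate
in `G`. -/
theorem double_embeds_and_conjugacy {G : Type*} [Group G] (H : Subgroup G) :
    Function.Injective (GroupDouble.incl H) ∧
      ∀ u v : G,
        IsConj (GroupDouble.incl H u) (GroupDouble.incl H v) ↔ IsConj u v := by
  -- the retraction `2G → G` sending both copies identically onto `G`
  let r : GroupDouble H →* G :=
    Monoid.PushoutI.lift (fun _ => MonoidHom.id G) H.subtype (fun _ => rfl)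
  have hr : ∀ g : G, r (GroupDouble.incl H g) = g := fun g => by
    simp [r, GroupDouble.incl, Monoid.PushoutI.lift_of]
  constructor
  · intro a b hab
    have := congrArg r hab
    simpa [hr] using this
  · intro u v
    constructor
    · rw [isConj_iff, isConj_iff]
      rintro ⟨t, ht⟩
      refine ⟨r t, ?_⟩
      have := congrArg r ht
      simpa [hr, map_mul] using this
    · rw [isConj_iff, isConj_iff]
      rintro ⟨t, ht⟩
      exact ⟨GroupDouble.incl H t, by
        simpa [map_mul, map_inv, mul_assoc] using congrArg (GroupDouble.incl H) ht⟩
end
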